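/- Let 0 < ν < 1 and T > 0. Let f ∈ L¹(ℝ) and let u : ℝ → ℂ be measurable, with ∬_{ℝ²} |f(x)||f(y)||x−y|^{ν−1} dx dy < ∞ and ∬_{ℝ²} |u(x)||u(y)||x−y|^{ν−1} dx dy < ∞. If f(x) = u(x−T) − u(x) for almost every x ∈ ℝ, then f̂(k/T) = 0 for every integer k. -/

import Mathlib

/-!
Periodicity of `e(x) = exp(-2πi x k/T)` gives `∫ f(x + jT) e(x) dx = f̂(k/T)` for every `j`, and
`∑_{j=1}^N f(x + jT) = u(x) - u(x + NT)` telescopes. Splitting `ℝ` at `|x| = 2NT` yields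
`N ‖f̂(k/T)‖ ≤ ∫_{|x| ≤ 2NT} |u| + ∫_{|x| ≤ 3NT} |u| + N ∫_{|x| > NT} |f|`.
Since `|x - y|^{ν-1} ≥ (2R)^{ν-1}` on the ball of radius `R`, finite energy of `u` gives
`(∫_{|x| ≤ R} |u|)² ≤ (2R)^{1-ν} · energy`, so the first two terms are `o(N)`; the last is
`N · o(1)`.
-/

open MeasureTheory Complex Filter Topology Metric Set Asymptotics Finset
open scoped ENNReal

theorem ae_fst_ne_snd : ∀ᵐ p : ℝ × ℝ, p.1 ≠ p.2 := by
  rw [Measure.volume_eq_prod]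
  exact (Measure.ae_prod_iff_ae_ae (p := fun p : ℝ × ℝ => p.1 ≠ p.2)
    (isClosed_eq continuous_fst continuous_snd).measurableSet.compl).mpr
    (Eventually.of_forall fun x => (Measure.ae_ne volume x).mono fun _ hy => hy.symm)

theorem one_le_rpow_mul_abs_sub_rpow {ν R : ℝ} (hν : ν ≤ 1) {x y : ℝ} (hxy : x ≠ y)
    (hx : |x| ≤ R) (hy : |y| ≤ R) : 1 ≤ (2 * R) ^ (1 - ν) * |x - y| ^ (ν - 1) := by
  have hd : 0 < |x - y| := abs_pos.mpr (sub_ne_zero.mpr hxy)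
  calc (1 : ℝ) = |x - y| ^ (1 - ν) * |x - y| ^ (ν - 1) := by
        rw [← Real.rpow_add hd]; simp
    _ ≤ (2 * R) ^ (1 - ν) * |x - y| ^ (ν - 1) := by
        gcongr
        linarith [abs_sub x y]

section Energy

variable {ν : ℝ} {u : ℝ → ℂ}

theorem lintegral_closedBall_enorm_sq_le (hν : ν ≤ 1) (hu : AEMeasurable u) (R : ℝ) :
    (∫⁻ x in closedBall 0 R, ‖u x‖ₑ) ^ 2 ≤ ENNReal.ofReal ((2 * R) ^ (1 - ν)) *
      ∫⁻ p : ℝ × ℝ, ‖u p.1‖ₑ * ‖u p.2‖ₑ * ENNReal.ofReal (|p.1 - p.2| ^ (ν - 1)) := by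
  set B := closedBall (0 : ℝ) R
  calc (∫⁻ x in B, ‖u x‖ₑ) ^ 2 = ∫⁻ p in B ×ˢ B, ‖u p.1‖ₑ * ‖u p.2‖ₑ := by
        rw [sq, Measure.volume_eq_prod, ← Measure.prod_restrict,
          lintegral_prod_mul hu.enorm.restrict hu.enorm.restrict]
    _ ≤ ∫⁻ p in B ×ˢ B, ENNReal.ofReal ((2 * R) ^ (1 - ν)) *
          (‖u p.1‖ₑ * ‖u p.2‖ₑ * ENNReal.ofReal (|p.1 - p.2| ^ (ν - 1))) := by
        refine setLIntegral_mono_ae' (measurableSet_closedBall.prod measurableSet_closedBall) ?_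
        filter_upwards [ae_fst_ne_snd] with p hp hpB
        simp only [B, mem_prod, mem_closedBall, dist_zero_right, Real.norm_eq_abs] at hpB
        have h1 := ENNReal.one_le_ofReal.mpr (one_le_rpow_mul_abs_sub_rpow hν hp hpB.1 hpB.2)
        rw [ENNReal.ofReal_mul (Real.rpow_nonneg (by linarith [abs_nonneg p.1]) _)] at h1
        calc ‖u p.1‖ₑ * ‖u p.2‖ₑ = 1 * (‖u p.1‖ₑ * ‖u p.2‖ₑ) := (one_mul _).symm
          _ ≤ ENNReal.ofReal ((2 * R) ^ (1 - ν)) * ENNReal.ofReal (|p.1 - p.2| ^ (ν - 1)) *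
                (‖u p.1‖ₑ * ‖u p.2‖ₑ) := by gcongr
          _ = _ := by ring
    _ ≤ _ := by
        rw [lintegral_const_mul' _ _ ENNReal.ofReal_ne_top]
        gcongr
        exact Measure.restrict_le_self

theorem lintegral_energy_eq_ofReal
    (hE : Integrable (fun p : ℝ × ℝ => ‖u p.1‖ * ‖u p.2‖ * |p.1 - p.2| ^ (ν - 1))) :
    ∫⁻ p : ℝ × ℝ, ‖u p.1‖ₑ * ‖u p.2‖ₑ * ENNReal.ofReal (|p.1 - p.2| ^ (ν - 1)) =
      ENNReal.ofReal (∫ p : ℝ × ℝ, ‖u p.1‖ * ‖u p.2‖ * |p.1 - p.2| ^ (ν - 1)) := by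
  rw [ofReal_integral_eq_lintegral_ofReal hE (Eventually.of_forall fun p => by positivity)]
  congr 1 with p
  rw [ENNReal.ofReal_mul (by positivity), ENNReal.ofReal_mul (by positivity), ofReal_norm,
    ofReal_norm]

theorem lintegral_closedBall_enorm_sq_le_ofReal (hν : ν ≤ 1) (hu : AEMeasurable u)
    (hE : Integrable (fun p : ℝ × ℝ => ‖u p.1‖ * ‖u p.2‖ * |p.1 - p.2| ^ (ν - 1))) (R : ℝ) :
    (∫⁻ x in closedBall 0 R, ‖u x‖ₑ) ^ 2 ≤ ENNReal.ofReal ((2 * R) ^ (1 - ν)) *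
      ENNReal.ofReal (∫ p : ℝ × ℝ, ‖u p.1‖ * ‖u p.2‖ * |p.1 - p.2| ^ (ν - 1)) :=
  lintegral_energy_eq_ofReal hE ▸ lintegral_closedBall_enorm_sq_le hν hu R

theorem locallyIntegrable_of_integrable_energy (hν : ν ≤ 1) (hu : AEStronglyMeasurable u)
    (hE : Integrable (fun p : ℝ × ℝ => ‖u p.1‖ * ‖u p.2‖ * |p.1 - p.2| ^ (ν - 1))) :
    LocallyIntegrable u := by
  refine locallyIntegrable_iff.mpr fun k hk => ?_
  obtain ⟨R, -, hkR⟩ := hk.isBounded.subset_closedBall_lt 0 0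
  have hsq := lintegral_closedBall_enorm_sq_le_ofReal hν hu.aemeasurable hE R
  have hfin : ∫⁻ x in closedBall 0 R, ‖u x‖ₑ < ∞ :=
    (ENNReal.pow_lt_top_iff.mp (hsq.trans_lt (by finiteness))).resolve_right two_ne_zero
  exact IntegrableOn.mono_set ⟨hu.restrict, hfin⟩ hkR

theorem integral_closedBall_norm_sq_le (hν : ν ≤ 1) (hu : AEStronglyMeasurable u)
    (hE : Integrable (fun p : ℝ × ℝ => ‖u p.1‖ * ‖u p.2‖ * |p.1 - p.2| ^ (ν - 1)))
    {R : ℝ} (hR : 0 ≤ R) :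
    (∫ x in closedBall 0 R, ‖u x‖) ^ 2 ≤
      (2 * R) ^ (1 - ν) * ∫ p : ℝ × ℝ, ‖u p.1‖ * ‖u p.2‖ * |p.1 - p.2| ^ (ν - 1) := by
  have hsq := lintegral_closedBall_enorm_sq_le_ofReal hν hu.aemeasurable hE R
  rw [← ENNReal.ofReal_mul (by positivity)] at hsq
  rw [integral_norm_eq_lintegral_enorm hu.restrict, ← ENNReal.toReal_pow]
  exact ENNReal.toReal_le_of_le_ofReal (by positivity) hsq

theorem isLittleO_integral_closedBall_norm (hν0 : 0 ≤ ν) (hν1 : ν ≤ 1)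
    (hu : AEStronglyMeasurable u)
    (hE : Integrable (fun p : ℝ × ℝ => ‖u p.1‖ * ‖u p.2‖ * |p.1 - p.2| ^ (ν - 1))) :
    (fun R => ∫ x in closedBall 0 R, ‖u x‖) =o[atTop] id := by
  set K := ∫ p : ℝ × ℝ, ‖u p.1‖ * ‖u p.2‖ * |p.1 - p.2| ^ (ν - 1)
  have hK : 0 ≤ K := integral_nonneg fun p => by positivity
  refine isLittleO_iff.mpr fun c hc => ?_
  filter_upwards [eventually_ge_atTop 1, eventually_ge_atTop (2 * K / c ^ 2)] with R hR1 hRK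
  have hL := integral_closedBall_norm_sq_le hν1 hu hE (show 0 ≤ R by linarith)
  have h2R : (2 * R) ^ (1 - ν) ≤ 2 * R := Real.rpow_le_self_of_one_le (by linarith) (by linarith)
  have hKR : 2 * K ≤ c ^ 2 * R := (div_le_iff₀' (by positivity)).mp hRK
  rw [Real.norm_of_nonneg (integral_nonneg fun x => norm_nonneg _), id,
    Real.norm_of_nonneg (by linarith)]
  refine abs_le_of_sq_le_sq' ?_ (by positivity) |>.2
  nlinarith

end Energy

theorem setLIntegral_comp_add_right_le {G : Type*} [AddGroup G] [MeasurableSpace G]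
    [MeasurableAdd G] {μ : Measure G} [μ.IsAddRightInvariant] (g : G → ℝ≥0∞) {s t : Set G}
    {a : G} (hst : ∀ x ∈ s, x + a ∈ t) :
    ∫⁻ x in s, g (x + a) ∂μ ≤ ∫⁻ x in t, g x ∂μ :=
  calc ∫⁻ x in s, g (x + a) ∂μ ≤ ∫⁻ x in (· + a) ⁻¹' t, g (x + a) ∂μ := lintegral_mono_set hst
    _ = ∫⁻ x in t, g x ∂μ := (measurePreserving_add_right μ a).setLIntegral_comp_preimage_emb
        (measurableEmbedding_addRight a) g t

theorem setLIntegral_closedBall_enorm_sub_comp_add_le {u : ℝ → ℂ} (hu : AEMeasurable u)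
    (R a : ℝ) :
    ∫⁻ x in closedBall 0 R, ‖u x - u (x + a)‖ₑ ≤
      (∫⁻ x in closedBall 0 R, ‖u x‖ₑ) + ∫⁻ x in closedBall 0 (R + |a|), ‖u x‖ₑ := by
  have hst : ∀ x ∈ closedBall (0 : ℝ) R, x + a ∈ closedBall 0 (R + |a|) := fun x hx => by
    simp only [mem_closedBall, dist_zero_right, Real.norm_eq_abs] at hx ⊢
    linarith [abs_add_le x a]
  calc ∫⁻ x in closedBall 0 R, ‖u x - u (x + a)‖ₑ
      ≤ ∫⁻ x in closedBall 0 R, (‖u x‖ₑ + ‖u (x + a)‖ₑ) := lintegral_mono fun x => enorm_sub_le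
    _ = (∫⁻ x in closedBall 0 R, ‖u x‖ₑ) + ∫⁻ x in closedBall 0 R, ‖u (x + a)‖ₑ :=
        lintegral_add_left' hu.enorm.restrict _
    _ ≤ _ := add_le_add_right
        (setLIntegral_comp_add_right_le (μ := volume) (fun y => ‖u y‖ₑ) hst) _

theorem setLIntegral_compl_closedBall_enorm_sum_le {f : ℝ → ℂ} (hf : AEMeasurable f) {T : ℝ}
    (hT : 0 ≤ T) (N : ℕ) :
    ∫⁻ x in (closedBall 0 (2 * T * N))ᶜ, ‖∑ i ∈ range N, f (x + (i + 1) * T)‖ₑ ≤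
      N * ∫⁻ x in (closedBall 0 (T * N))ᶜ, ‖f x‖ₑ := by
  have hst : ∀ i ∈ range N, ∀ x ∈ (closedBall (0 : ℝ) (2 * T * N))ᶜ,
      x + (i + 1) * T ∈ (closedBall (0 : ℝ) (T * N))ᶜ := fun i hi x hx => by
    have hiN : (i : ℝ) + 1 ≤ N := by exact_mod_cast mem_range.mp hi
    simp only [mem_compl_iff, mem_closedBall, dist_zero_right, Real.norm_eq_abs, not_le] at hx ⊢
    have := abs_sub_abs_le_abs_add x ((i + 1) * T)
    rw [abs_of_nonneg (show 0 ≤ ((i : ℝ) + 1) * T by positivity)] at this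
    nlinarith
  calc ∫⁻ x in (closedBall 0 (2 * T * N))ᶜ, ‖∑ i ∈ range N, f (x + (i + 1) * T)‖ₑ
      ≤ ∫⁻ x in (closedBall 0 (2 * T * N))ᶜ, ∑ i ∈ range N, ‖f (x + (i + 1) * T)‖ₑ :=
        lintegral_mono fun x => enorm_sum_le _ _
    _ = ∑ i ∈ range N, ∫⁻ x in (closedBall 0 (2 * T * N))ᶜ, ‖f (x + (i + 1) * T)‖ₑ :=
        lintegral_finsetSum' _ fun i _ => (hf.comp_quasiMeasurePreserving
          (measurePreserving_add_right volume _).quasiMeasurePreserving).enorm.restrict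
    _ ≤ ∑ _i ∈ range N, ∫⁻ x in (closedBall 0 (T * N))ᶜ, ‖f x‖ₑ :=
        sum_le_sum fun i hi => setLIntegral_comp_add_right_le (μ := volume) _ (hst i hi)
    _ = N * ∫⁻ x in (closedBall 0 (T * N))ᶜ, ‖f x‖ₑ := by simp

theorem integral_comp_add_int_mul_mul_of_periodic (f : ℝ → ℂ) {E : ℝ → ℂ} {T : ℝ}
    (hE : Function.Periodic E T) (n : ℤ) :
    ∫ x, f (x + n * T) * E x = ∫ x, f x * E x :=
  calc ∫ x, f (x + n * T) * E x = ∫ x, f (x + n * T) * E (x + n * T) := by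
        simp only [(hE.int_mul n) _]
    _ = ∫ x, f x * E x := integral_add_right_eq_self (fun x => f x * E x) _

theorem ae_sum_comp_add_eq_sub {f u : ℝ → ℂ} {T : ℝ} (heq : ∀ᵐ x, f x = u (x - T) - u x)
    (N : ℕ) : ∀ᵐ x, ∑ i ∈ range N, f (x + (i + 1) * T) = u x - u (x + N * T) := by
  have hshift : ∀ i : ℕ, ∀ᵐ x, f (x + (i + 1) * T) = u (x + i * T) - u (x + (i + 1) * T) :=
    fun i => by
      filter_upwards [(measurePreserving_add_right volume ((i + 1) * T)).quasiMeasurePreserving.ae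
        heq] with x hx
      rw [hx]; ring_nf
  filter_upwards [ae_all_iff.mpr hshift] with x hx
  simp_rw [hx]
  simpa using sum_range_sub' (fun i : ℕ => u (x + i * T)) N

theorem nat_mul_enorm_integral_mul_le {f u E : ℝ → ℂ} {T : ℝ} (hT : 0 ≤ T) (hf : Integrable f)
    (hu : AEMeasurable u) (heq : ∀ᵐ x, f x = u (x - T) - u x) (hE : Function.Periodic E T)
    (hEm : AEStronglyMeasurable E) (hE1 : ∀ x, ‖E x‖ ≤ 1) (N : ℕ) :
    N * ‖∫ x, f x * E x‖ₑ ≤ (∫⁻ x in closedBall 0 (2 * T * N), ‖u x‖ₑ) +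
      (∫⁻ x in closedBall 0 (3 * T * N), ‖u x‖ₑ) +
        N * ∫⁻ x in (closedBall 0 (T * N))ᶜ, ‖f x‖ₑ := by
  set F : ℝ → ℂ := fun x => ∑ i ∈ range N, f (x + (i + 1) * T)
  have hF : (N : ℂ) * ∫ x, f x * E x = ∫ x, F x * E x := by
    simp_rw [F, sum_mul]
    rw [integral_finsetSum _ fun i _ => (hf.comp_add_right _).mul_bdd hEm (.of_forall hE1)]
    rw [sum_congr rfl fun i _ => by
      simpa using integral_comp_add_int_mul_mul_of_periodic f hE (i + 1)]
    simp
  have hball := setLIntegral_closedBall_enorm_sub_comp_add_le hu (2 * T * N) (N * T)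
  rw [abs_of_nonneg (by positivity), show 2 * T * N + N * T = 3 * T * N by ring] at hball
  calc (N : ℝ≥0∞) * ‖∫ x, f x * E x‖ₑ = ‖∫ x, F x * E x‖ₑ := by
        rw [← hF, enorm_mul, ← ofReal_norm (N : ℂ), Complex.norm_natCast, ENNReal.ofReal_natCast]
    _ ≤ ∫⁻ x, ‖F x‖ₑ := (enorm_integral_le_lintegral_enorm _).trans <| lintegral_mono fun x => by
        rw [enorm_mul]
        exact mul_le_of_le_one_right' (by simpa [← ofReal_norm] using hE1 x)
    _ = (∫⁻ x in closedBall 0 (2 * T * N), ‖F x‖ₑ) +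
          ∫⁻ x in (closedBall 0 (2 * T * N))ᶜ, ‖F x‖ₑ :=
        (lintegral_add_compl _ measurableSet_closedBall).symm
    _ ≤ _ := by
        refine add_le_add (le_of_eq_of_le ?_ hball)
          (setLIntegral_compl_closedBall_enorm_sum_le hf.aemeasurable hT N)
        refine setLIntegral_congr_fun_ae measurableSet_closedBall ?_
        filter_upwards [ae_sum_comp_add_eq_sub heq N] with x hx _
        rw [← hx]

theorem tendsto_setIntegral_compl_closedBall {F : Type*} [NormedAddCommGroup F] [NormedSpace ℝ F]
    {f : ℝ → F} (hf : Integrable f) :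
    Tendsto (fun R => ∫ x in (closedBall 0 R)ᶜ, f x) atTop (𝓝 0) := by
  have h := tendsto_setIntegral_of_antitone (μ := volume) (f := f)
    (s := fun R => (closedBall 0 R)ᶜ) (fun R => measurableSet_closedBall.compl)
    (fun R R' h => compl_subset_compl.mpr (closedBall_subset_closedBall h)) ⟨0, hf.integrableOn⟩
  rwa [iInter_eq_empty_iff.mpr fun x => ⟨|x|, by simp⟩, Measure.restrict_empty,
    integral_zero_measure] at h

theorem Asymptotics.IsLittleO.tendsto_comp_const_mul_natCast_div {g : ℝ → ℝ}
    (hg : g =o[atTop] id) {b : ℝ} (hb : 0 < b) :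
    Tendsto (fun N : ℕ => g (b * N) / N) atTop (𝓝 0) := by
  have h := (hg.tendsto_div_nhds_zero.comp
    (tendsto_natCast_atTop_atTop.const_mul_atTop hb)).const_mul b
  rw [mul_zero] at h
  refine h.congr' ((eventually_ne_atTop 0).mono fun N hN => ?_)
  simp only [Function.comp_apply, id]
  field_simp

theorem integral_mul_eq_zero_of_eq_comp_sub_sub {f u E : ℝ → ℂ} {T : ℝ} (hT : 0 < T)
    (hf : Integrable f) (hu : LocallyIntegrable u)
    (hgrowth : (fun R => ∫ x in closedBall 0 R, ‖u x‖) =o[atTop] id)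
    (heq : ∀ᵐ x, f x = u (x - T) - u x) (hE : Function.Periodic E T)
    (hEm : AEStronglyMeasurable E) (hE1 : ∀ x, ‖E x‖ ≤ 1) :
    ∫ x, f x * E x = 0 := by
  have hbound : ∀ N : ℕ, 0 < N → ‖∫ x, f x * E x‖ ≤
      (∫ x in closedBall 0 (2 * T * N), ‖u x‖) / N +
        (∫ x in closedBall 0 (3 * T * N), ‖u x‖) / N +
          ∫ x in (closedBall 0 (T * N))ᶜ, ‖f x‖ := by
    intro N hN
    have h := nat_mul_enorm_integral_mul_le hT.le hf hu.aestronglyMeasurable.aemeasurable heq hE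
      hEm hE1 N
    have hL : ∀ R, ENNReal.ofReal (∫ x in closedBall 0 R, ‖u x‖) =
        ∫⁻ x in closedBall 0 R, ‖u x‖ₑ := fun R =>
      ofReal_integral_norm_eq_lintegral_enorm (hu.integrableOn_isCompact (isCompact_closedBall 0 R))
    rw [← hL, ← hL, ← ofReal_integral_norm_eq_lintegral_enorm hf.integrableOn, ← ofReal_norm,
      ← ENNReal.ofReal_natCast, ← ENNReal.ofReal_mul (by positivity),
      ← ENNReal.ofReal_mul (by positivity), ← ENNReal.ofReal_add (by positivity) (by positivity),
      ← ENNReal.ofReal_add (by positivity) (by positivity),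
      ENNReal.ofReal_le_ofReal_iff (by positivity)] at h
    have hN' : (0 : ℝ) < N := by exact_mod_cast hN
    rw [← le_div_iff₀' hN'] at h
    refine h.trans_eq ?_
    rw [add_div, add_div, mul_div_cancel_left₀ _ hN'.ne']
  have hlim := ((hgrowth.tendsto_comp_const_mul_natCast_div (by positivity : (0 : ℝ) < 2 * T)).add
    (hgrowth.tendsto_comp_const_mul_natCast_div (by positivity : (0 : ℝ) < 3 * T))).add
    ((tendsto_setIntegral_compl_closedBall hf.norm).comp
      (tendsto_natCast_atTop_atTop.const_mul_atTop hT))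
  rw [add_zero, add_zero] at hlim
  exact norm_le_zero_iff.mp (ge_of_tendsto hlim ((eventually_gt_atTop 0).mono hbound))

theorem periodic_cexp_neg_two_pi_mul_I_mul_int_div (k : ℤ) {T : ℝ} (hT : T ≠ 0) :
    Function.Periodic (fun x : ℝ => cexp (-2 * Real.pi * I * x * ((k : ℝ) / T))) T := by
  intro x
  have : -2 * Real.pi * I * ↑(x + T) * ((k : ℝ) / T) =
      -2 * Real.pi * I * x * ((k : ℝ) / T) + (-k : ℤ) * (2 * Real.pi * I) := by
    push_cast
    field_simp [ofReal_ne_zero.mpr hT]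
    ring
  simp only [this, exp_add, exp_int_mul_two_pi_mul_I, mul_one]

theorem norm_cexp_neg_two_pi_mul_I_mul (x ξ : ℝ) : ‖cexp (-2 * Real.pi * I * x * ξ)‖ = 1 := by
  rw [show -2 * Real.pi * I * x * ξ = ((-2 * Real.pi * x * ξ : ℝ) : ℂ) * I by push_cast; ring,
    norm_exp_ofReal_mul_I]

theorem stmt_2_general (ν T : ℝ) (hν0 : 0 < ν) (hν1 : ν < 1) (hT : 0 < T)
    (f u : ℝ → ℂ)
    (hf1 : Integrable f (volume : Measure ℝ))
    (hu_meas : Measurable u)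
    (hu2 : Integrable
      (fun p : ℝ × ℝ => ‖u p.1‖ * ‖u p.2‖ * |p.1 - p.2| ^ (ν - 1))
      (volume : Measure (ℝ × ℝ)))
    (heq : ∀ᵐ x : ℝ, f x = u (x - T) - u x) :
    ∀ k : ℤ,
      (∫ x : ℝ, f x * Complex.exp (-2 * Real.pi * I * x * ((k : ℝ) / T))) = 0 := by
  intro k
  have hu : AEStronglyMeasurable u := hu_meas.aestronglyMeasurable
  exact integral_mul_eq_zero_of_eq_comp_sub_sub hT hf1
    (locallyIntegrable_of_integrable_energy hν1.le hu hu2)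
    (isLittleO_integral_closedBall_norm hν0.le hν1.le hu hu2) heq
    (periodic_cexp_neg_two_pi_mul_I_mul_int_div k hT.ne') (by fun_prop)
    fun x => by exact_mod_cast (norm_cexp_neg_two_pi_mul_I_mul x (k / T)).le

/-- Complementary-series setting: let `0 < ν < 1`, `T > 0`,
`f ∈ L¹(ℝ)` and `u` measurable, both with finite complementary-series norm
`∬ |h(x)||h(y)||x−y|^{ν−1} dx dy < ∞`.  If `f(x) = u(x−T) − u(x)` a.e. then
`f̂(k/T) = 0` for every integer `k`. -/
theorem stmt_2 (ν T : ℝ) (hν0 : 0 < ν) (hν1 : ν < 1) (hT : 0 < T)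
    (f u : ℝ → ℂ)
    (hf1 : Integrable f (volume : Measure ℝ))
    (hu_meas : Measurable u)
    (hf2 : Integrable
      (fun p : ℝ × ℝ => ‖f p.1‖ * ‖f p.2‖ * |p.1 - p.2| ^ (ν - 1))
      (volume : Measure (ℝ × ℝ)))
    (hu2 : Integrable
      (fun p : ℝ × ℝ => ‖u p.1‖ * ‖u p.2‖ * |p.1 - p.2| ^ (ν - 1))
      (volume : Measure (ℝ × ℝ)))
    (heq : ∀ᵐ x : ℝ, f x = u (x - T) - u x) :
    ∀ k : ℤ,
      (∫ x : ℝ, f x * Complex.exp (-2 * Real.pi * I * x * ((k : ℝ) / T))) = 0 :=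
  stmt_2_general ν T hν0 hν1 hT f u hf1 hu_meas hu2 heq
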